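/- Let α, ε ∈ ℝ and let (x,y,x̃,ỹ) ∈ ℝ⁴ satisfy the discrete Suslov equations x̃ − x = εα(x̃y + xỹ) and ỹ − y = −2ε x̃ x. Assume 1 + ε²αx² ≠ 0 and 1 + ε²αx̃² ≠ 0. Then (x̃² + αỹ²)/(1 + ε²αx̃²) = (x² + αy²)/(1 + ε²αx²), i.e. H(ε) = (x² + αy²)/(1 + ε²αx²) is a conserved quantity of the Hirota–Kimura discretization of the reduced Suslov system. -/
import Mathlib


/-- Conserved quantity of the Hirota–Kimura discretization of the reduced
Suslov system `ẋ = αxy`, `ẏ = -x²`. -/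
theorem suslov_kahan_integral (α ε x y xt yt : ℝ)
    (h1 : xt - x = ε * α * (xt * y + x * yt))
    (h2 : yt - y = -(2 * ε * xt * x))
    (hd : 1 + ε ^ 2 * α * x ^ 2 ≠ 0)
    (hdt : 1 + ε ^ 2 * α * xt ^ 2 ≠ 0) :
    (xt ^ 2 + α * yt ^ 2) / (1 + ε ^ 2 * α * xt ^ 2)
      = (x ^ 2 + α * y ^ 2) / (1 + ε ^ 2 * α * x ^ 2) := by
  rw [div_eq_div_iff hdt hd]
  linear_combination (xt + x + ε * α * (xt * y - x * yt)) * h1 + α * (yt + y) * h2
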